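/- Let A, B be positive definite matrices and 0 ≤ t ≤ 1. Then (A^{-1} ♮_t B^{-1})^{-1} = A ♮_t B, where ♮_t denotes the weighted spectral geometric mean A♮_t B = (A^{-1}♯B)^t A (A^{-1}♯B)^t. -/

import Mathlib

/-!
For positive definite `A`, the powers `mpow A s` are the continuous functional calculus of
`x ↦ x ^ s`, so they obey `A^(s+u) = A^s A^u`, `(A^s)^u = A^(su)`, hence `A^(-s) = (A^s)⁻¹` and
`(A⁻¹)^s = A^(-s)`. These give `A⁻¹ ♯ₜ B⁻¹ = (A ♯ₜ B)⁻¹`. Thus inverting `A` and `B` replaces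
`G = A⁻¹ ♯ B` by `G⁻¹`, and `(A⁻¹ ♮ₜ B⁻¹)⁻¹ = (G^(-t) A⁻¹ G^(-t))⁻¹ = G^t A G^t = A ♮ₜ B`.
-/

open Matrix

variable {n : Type*} [Fintype n] [DecidableEq n]

/-- Real power of a matrix, defined via the spectral decomposition for Hermitian matrices. -/
noncomputable def mpow (A : Matrix n n ℝ) (t : ℝ) : Matrix n n ℝ :=
  if hA : A.IsHermitian then
    (hA.eigenvectorUnitary : Matrix n n ℝ) * Matrix.diagonal (fun i => hA.eigenvalues i ^ t) *
      star (hA.eigenvectorUnitary : Matrix n n ℝ)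
  else A

/-- The weighted geometric mean `A ♯ₜ B = A^{1/2} (A^{-1/2} B A^{-1/2})^t A^{1/2}`. -/
noncomputable def gmean (t : ℝ) (A B : Matrix n n ℝ) : Matrix n n ℝ :=
  mpow A (1/2) * mpow (mpow A (-(1/2)) * B * mpow A (-(1/2))) t * mpow A (1/2)

/-- The weighted spectral geometric mean `A ♮ₜ B = (A⁻¹ ♯ B)^t A (A⁻¹ ♯ B)^t`. -/
noncomputable def smean (t : ℝ) (A B : Matrix n n ℝ) : Matrix n n ℝ :=
  mpow (gmean (1/2) A⁻¹ B) t * A * mpow (gmean (1/2) A⁻¹ B) t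

lemma Matrix.PosDef.mul_mul_of_isHermitian {R : Type*} [Ring R] [PartialOrder R] [StarRing R]
    {M X : Matrix n n R} (hM : M.PosDef) (hX : X.IsHermitian) (hXu : IsUnit X) :
    (X * M * X).PosDef := by
  simpa only [star_eq_conjTranspose, hX.eq] using hXu.posDef_star_left_conjugate_iff.mpr hM

section mpow

variable {A : Matrix n n ℝ}

lemma mpow_eq_cfc (hA : A.IsHermitian) (t : ℝ) : mpow A t = cfc (fun x : ℝ => x ^ t) A := by
  rw [mpow, dif_pos hA, hA.cfc_eq, IsHermitian.cfc]
  rfl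

lemma isHermitian_mpow (hA : A.IsHermitian) (t : ℝ) : (mpow A t).IsHermitian := by
  rw [mpow_eq_cfc hA]
  exact cfc_predicate _ A

lemma posDef_mpow (hA : A.PosDef) (t : ℝ) : (mpow A t).PosDef := by
  have hD : (diagonal fun i => hA.1.eigenvalues i ^ t).PosDef :=
    PosDef.diagonal fun i => Real.rpow_pos_of_pos (hA.eigenvalues_pos i) t
  rw [mpow, dif_pos hA.1]
  exact Unitary.isUnit_coe.posDef_star_right_conjugate_iff.mpr hD

lemma mpow_zero (hA : A.IsHermitian) : mpow A 0 = 1 := by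
  rw [mpow_eq_cfc hA, ← cfc_one ℝ A]
  exact cfc_congr fun x _ => Real.rpow_zero x

lemma mpow_one (hA : A.IsHermitian) : mpow A 1 = A := by
  rw [mpow_eq_cfc hA]
  conv_rhs => rw [← cfc_id ℝ A hA]
  exact cfc_congr fun x _ => Real.rpow_one x

open scoped MatrixOrder in
lemma mpow_add (hA : A.PosDef) (s u : ℝ) : mpow A (s + u) = mpow A s * mpow A u := by
  have hfin := A.finite_real_spectrum
  simp only [mpow_eq_cfc hA.1]
  rw [← cfc_mul _ _ A (hfin.continuousOn _) (hfin.continuousOn _)]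
  exact cfc_congr fun x hx => Real.rpow_add (hA.isStrictlyPositive.spectrum_pos hx) s u

lemma mpow_neg (hA : A.PosDef) (s : ℝ) : mpow A (-s) = (mpow A s)⁻¹ :=
  (inv_eq_right_inv <| by rw [← mpow_add hA, add_neg_cancel, mpow_zero hA.1]).symm

lemma mpow_mpow (hA : A.PosSemidef) (s u : ℝ) : mpow (mpow A s) u = mpow A (s * u) := by
  have hfin := A.finite_real_spectrum
  have hcomp := cfc_comp (fun x : ℝ => x ^ u) (fun x : ℝ => x ^ s) A hA.1
    ((hfin.image _).continuousOn _) (hfin.continuousOn _)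
  rw [mpow_eq_cfc (isHermitian_mpow hA.1 s), mpow_eq_cfc hA.1, mpow_eq_cfc hA.1, ← hcomp]
  exact cfc_congr fun x hx => (Real.rpow_mul
    (posSemidef_iff_isHermitian_and_spectrum_nonneg.mp hA |>.2 hx) s u).symm

lemma mpow_inv (hA : A.PosDef) (s : ℝ) : mpow A⁻¹ s = mpow A (-s) := by
  have hA_inv : A⁻¹ = mpow A (-1) := by rw [mpow_neg hA, mpow_one hA.1]
  rw [hA_inv, mpow_mpow hA.posSemidef, neg_one_mul]

end mpow

section gmean

variable {A B : Matrix n n ℝ}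

lemma posDef_mpow_mul_mul_mpow (hA : A.PosDef) (hB : B.PosDef) (s : ℝ) :
    (mpow A s * B * mpow A s).PosDef :=
  hB.mul_mul_of_isHermitian (isHermitian_mpow hA.1 s) (posDef_mpow hA s).isUnit

lemma posDef_gmean (t : ℝ) (hA : A.PosDef) (hB : B.PosDef) : (gmean t A B).PosDef :=
  posDef_mpow_mul_mul_mpow hA (posDef_mpow (posDef_mpow_mul_mul_mpow hA hB _) t) _

lemma gmean_inv_inv (t : ℝ) (hA : A.PosDef) (hB : B.PosDef) :
    gmean t A⁻¹ B⁻¹ = (gmean t A B)⁻¹ := by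
  have hM := posDef_mpow_mul_mul_mpow hA hB (-(1/2))
  have hM_inv :
      mpow A (1/2) * B⁻¹ * mpow A (1/2) = (mpow A (-(1/2)) * B * mpow A (-(1/2)))⁻¹ := by
    rw [Matrix.mul_inv_rev, Matrix.mul_inv_rev, ← mpow_neg hA, neg_neg, mul_assoc]
  rw [gmean, gmean, mpow_inv hA, mpow_inv hA, neg_neg, hM_inv]
  generalize mpow A (-(1/2)) * B * mpow A (-(1/2)) = M at hM ⊢
  rw [mpow_inv hM, mpow_neg hM, mpow_neg hA, Matrix.mul_inv_rev, Matrix.mul_inv_rev, mul_assoc]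

end gmean

theorem smean_inv_inv_general (t : ℝ)
    (A B : Matrix n n ℝ) (hA : A.PosDef) (hB : B.PosDef) :
    (smean t A⁻¹ B⁻¹)⁻¹ = smean t A B := by
  set G := gmean (1/2) A⁻¹ B
  have hG : G.PosDef := posDef_gmean _ hA.inv hB
  have hGt_det : IsUnit (mpow G t).det := (isUnit_iff_isUnit_det _).mp (posDef_mpow hG t).isUnit
  have hA_det : IsUnit A.det := (isUnit_iff_isUnit_det _).mp hA.isUnit
  rw [smean, smean, gmean_inv_inv _ hA.inv hB, mpow_inv hG, mpow_neg hG, Matrix.mul_inv_rev,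
    Matrix.mul_inv_rev, nonsing_inv_nonsing_inv _ hGt_det, nonsing_inv_nonsing_inv _ hA_det,
    mul_assoc]

theorem smean_inv_inv (t : ℝ) (ht0 : 0 ≤ t) (ht1 : t ≤ 1)
    (A B : Matrix n n ℝ) (hA : A.PosDef) (hB : B.PosDef) :
    (smean t A⁻¹ B⁻¹)⁻¹ = smean t A B :=
  smean_inv_inv_general t A B hA hB
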